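/- Refined Atkin bound for cycles of g: let m be an integer with m ≥ 8 and k a natural number such that g^(k)(m) = m and m ≤ g^(i)(m) for all i < k. Let k₁ be the number of indices i < k with g^(i)(m) not divisible by 3, let k₂ = k - k₁, and suppose k₁ ≥ 1. Then, with λ = (4/3)^{k₁}·(2/3)^{k₂} as a real number, |ln λ| ≤ 63·k₁/(248·m); equivalently, m ≤ (63/248)/((1/k₁)·|ln λ|). -/

import Mathlib

/-- The mapping generating the original Collatz problem. -/
def g (n : ℤ) : ℤ :=
  if n % 3 = 0 then 2 * n / 3
  else if n % 3 = 1 then (4 * n - 1) / 3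
  else (4 * n + 1) / 3

lemma g_three_mul (a : ℤ) :
    3 * g a = if a % 3 = 0 then 2*a else if a % 3 = 1 then 4*a-1 else 4*a+1 := by
  unfold g; split_ifs <;> omega

lemma neg_log_one_sub_le {x : ℝ} (h0 : 0 ≤ x) (h1 : x ≤ 1/32) :
    -Real.log (1 - x) ≤ 63 * x / 62 := by
  have hx1 : |x| < 1 := by rw [abs_of_nonneg h0]; linarith
  have h := Real.abs_log_sub_add_sum_range_le hx1 3
  rw [Finset.sum_range_succ, Finset.sum_range_succ, Finset.sum_range_one,
    abs_of_nonneg h0] at h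
  have hden : (0:ℝ) < 1 - x := by linarith
  have h2 := (abs_le.1 h).1
  push_cast at h2
  have hx2 : x^2 ≤ x/32 := by nlinarith
  have hx3 : x^3 ≤ x/1024 := by nlinarith
  have hx4 : x^4 ≤ x/32768 := by nlinarith
  have h4 : x ^ 4 / (1 - x) ≤ x / 31744 := by
    rw [div_le_iff₀ hden]; nlinarith
  linarith [h2, h4]

lemma step_div (a : ℤ) (ha : 0 < a) (h3 : a % 3 = 0) :
    Real.log ((g a : ℝ) / a) = Real.log (2/3) := by
  have h := g_three_mul a
  rw [if_pos h3] at h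
  have hr : (3:ℝ) * (g a : ℝ) = 2 * a := by exact_mod_cast congrArg (Int.cast : ℤ → ℝ) h
  have ha' : (a:ℝ) ≠ 0 := by positivity
  congr 1
  field_simp
  linarith

lemma step_nondiv (m a : ℤ) (hm : 8 ≤ m) (ha : m ≤ a) (h3 : ¬ (3:ℤ) ∣ a) :
    |Real.log ((g a : ℝ) / a) - Real.log (4/3)| ≤ 63 / (248 * (m:ℝ)) := by
  have hm8 : (8:ℝ) ≤ (m:ℝ) := by exact_mod_cast hm
  have haR : (8:ℝ) ≤ (a:ℝ) := by
    have : (m:ℝ) ≤ a := by exact_mod_cast ha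
    linarith
  have hapos : (0:ℝ) < a := by linarith
  set x : ℝ := 1 / (4 * (a:ℝ)) with hxdef
  have hx0 : 0 < x := by positivity
  have hx32 : x ≤ 1/32 := by
    rw [hxdef, div_le_div_iff₀ (by linarith) (by norm_num)]
    linarith
  have hxa : 63 * x / 62 = 63 / (248 * (a:ℝ)) := by
    rw [hxdef]; field_simp; ring
  have hmaR : (m:ℝ) ≤ (a:ℝ) := by exact_mod_cast ha
  have hbnd : 63 / (248 * (a:ℝ)) ≤ 63 / (248 * (m:ℝ)) := by
    rw [div_le_div_iff₀ (by linarith) (by linarith)]; nlinarith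
  have hcase : a % 3 = 1 ∨ a % 3 = 2 := by omega
  have h := g_three_mul a
  rcases hcase with hc | hc
  · rw [if_neg (by omega), if_pos hc] at h
    have hr : (3:ℝ) * (g a : ℝ) = 4 * a - 1 := by exact_mod_cast congrArg (Int.cast : ℤ → ℝ) h
    have hratio : (g a : ℝ) / a = 4/3 * (1 - x) := by
      rw [hxdef]; field_simp; linear_combination hr
    rw [hratio, Real.log_mul (by norm_num) (by nlinarith), add_sub_cancel_left]
    have hlogle : Real.log (1 - x) ≤ 0 := Real.log_nonpos (by linarith) (by linarith)
    rw [abs_of_nonpos hlogle]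
    calc -Real.log (1 - x) ≤ 63 * x / 62 := neg_log_one_sub_le hx0.le hx32
      _ = 63 / (248 * (a:ℝ)) := hxa
      _ ≤ _ := hbnd
  · rw [if_neg (by omega), if_neg (by omega)] at h
    have hr : (3:ℝ) * (g a : ℝ) = 4 * a + 1 := by exact_mod_cast congrArg (Int.cast : ℤ → ℝ) h
    have hratio : (g a : ℝ) / a = 4/3 * (1 + x) := by
      rw [hxdef]; field_simp; linear_combination hr
    rw [hratio, Real.log_mul (by norm_num) (by nlinarith), add_sub_cancel_left]
    have hlogge : 0 ≤ Real.log (1 + x) := Real.log_nonneg (by linarith)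
    rw [abs_of_nonneg hlogge]
    have hle : Real.log (1 + x) ≤ x := by
      have := Real.log_le_sub_one_of_pos (x := 1 + x) (by linarith)
      linarith
    calc Real.log (1 + x) ≤ x := hle
      _ ≤ 63 * x / 62 := by linarith
      _ = 63 / (248 * (a:ℝ)) := hxa
      _ ≤ _ := hbnd

/-- Refined Atkin bound: if `m ≥ 8` is the least term of a cycle of `g` of length `k`,
with `k₁ ≥ 1` steps on integers not divisible by 3 and `k₂ = k - k₁`, then
`|ln λ| ≤ 7 k₁/(24 m)` where `λ = (4/3)^k₁ (2/3)^k₂`. -/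
theorem atkin_bound_refined (m : ℤ) (hm : 8 ≤ m) (k : ℕ)
    (hcyc : g^[k] m = m) (hmin : ∀ i < k, m ≤ g^[i] m)
    (k₁ k₂ : ℕ)
    (hk₁ : k₁ = ((Finset.range k).filter fun i => ¬ (3 : ℤ) ∣ g^[i] m).card)
    (hk₂ : k₂ = k - k₁) (hk₁pos : 1 ≤ k₁) :
    |Real.log ((4 / 3 : ℝ) ^ k₁ * (2 / 3 : ℝ) ^ k₂)| ≤ 63 * k₁ / (248 * (m : ℝ)) := by
  classical
  set B : ℝ := 63 / (248 * (m:ℝ)) with hB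
  have hge : ∀ i, i ≤ k → 8 ≤ g^[i] m := by
    intro i hi
    rcases lt_or_eq_of_le hi with h | h
    · exact hm.trans (hmin i h)
    · subst h; rw [hcyc]; exact hm
  have hpos : ∀ i, i ≤ k → (0:ℝ) < ((g^[i] m : ℤ) : ℝ) := by
    intro i hi
    have := hge i hi
    exact_mod_cast lt_of_lt_of_le (by norm_num : (0:ℤ) < 8) this
  set c : ℕ → ℝ := fun i => if (3:ℤ) ∣ g^[i] m then Real.log (2/3) else Real.log (4/3)
    with hc
  set r : ℕ → ℝ := fun i =>
    Real.log (((g^[i+1] m : ℤ) : ℝ) / ((g^[i] m : ℤ) : ℝ)) - c i with hrdef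
  -- the sum of log-ratios telescopes to 0
  have hsum0 : ∑ i ∈ Finset.range k, (c i + r i) = 0 := by
    have heq : ∀ i ∈ Finset.range k, c i + r i =
        Real.log ((g^[i+1] m : ℤ) : ℝ) - Real.log ((g^[i] m : ℤ) : ℝ) := by
      intro i hi
      rw [Finset.mem_range] at hi
      rw [hrdef]
      simp only [add_sub_cancel]
      rw [Real.log_div (ne_of_gt (hpos (i+1) hi)) (ne_of_gt (hpos i hi.le))]
    rw [Finset.sum_congr rfl heq, Finset.sum_range_sub
      (fun i => Real.log ((g^[i] m : ℤ) : ℝ)), hcyc]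
    simp
  -- identify each term
  have hstep : ∀ i ∈ Finset.range k, |r i| ≤ if (3:ℤ) ∣ g^[i] m then 0 else B := by
    intro i hi
    rw [Finset.mem_range] at hi
    have hiter : g^[i+1] m = g (g^[i] m) := Function.iterate_succ_apply' g i m
    have hma : m ≤ g^[i] m := hmin i hi
    by_cases hd : (3:ℤ) ∣ g^[i] m
    · rw [if_pos hd]
      have : r i = 0 := by
        rw [hrdef]
        simp only
        rw [hc]
        simp only [if_pos hd]
        rw [hiter, step_div _ (by have := hge i hi.le; omega) (by omega), sub_self]
      rw [this, abs_zero]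
    · rw [if_neg hd]
      have : r i = Real.log (((g (g^[i] m) : ℤ) : ℝ) / ((g^[i] m : ℤ) : ℝ)) -
          Real.log (4/3) := by
        rw [hrdef]; simp only; rw [hc]; simp only [if_neg hd, hiter]
      rw [this]
      exact step_nondiv m _ hm hma hd
  -- sum of c equals log λ
  have hk₁le : k₁ ≤ k := by
    rw [hk₁]; exact le_trans (Finset.card_filter_le _ _) (by simp)
  have hcards : ((Finset.range k).filter fun i => (3 : ℤ) ∣ g^[i] m).card = k₂ := by
    have := Finset.card_filter_add_card_filter_not
      (s := Finset.range k) (p := fun i => (3 : ℤ) ∣ g^[i] m)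
    rw [Finset.card_range] at this
    omega
  have hsumc : ∑ i ∈ Finset.range k, c i =
      (k₂:ℝ) * Real.log (2/3) + (k₁:ℝ) * Real.log (4/3) := by
    rw [hc]
    rw [Finset.sum_ite, Finset.sum_const, Finset.sum_const, nsmul_eq_mul, nsmul_eq_mul,
      hcards]
    congr 2
    rw [hk₁]
  have hlam : Real.log ((4 / 3 : ℝ) ^ k₁ * (2 / 3 : ℝ) ^ k₂) =
      (k₁:ℝ) * Real.log (4/3) + (k₂:ℝ) * Real.log (2/3) := by
    rw [Real.log_mul (by positivity) (by positivity), Real.log_pow, Real.log_pow]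
  -- conclude
  have hkey : Real.log ((4 / 3 : ℝ) ^ k₁ * (2 / 3 : ℝ) ^ k₂) =
      -∑ i ∈ Finset.range k, r i := by
    rw [Finset.sum_add_distrib] at hsum0
    rw [hlam]
    rw [hsumc] at hsum0
    linarith
  rw [hkey, abs_neg]
  calc |∑ i ∈ Finset.range k, r i| ≤ ∑ i ∈ Finset.range k, |r i| :=
        Finset.abs_sum_le_sum_abs _ _
    _ ≤ ∑ i ∈ Finset.range k, (if (3:ℤ) ∣ g^[i] m then 0 else B) :=
        Finset.sum_le_sum hstep
    _ = (k₁:ℝ) * B := by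
        rw [Finset.sum_ite, Finset.sum_const, Finset.sum_const, nsmul_eq_mul, nsmul_eq_mul,
          mul_zero, zero_add, ← hk₁]
    _ = 63 * (k₁:ℕ) / (248 * (m:ℝ)) := by rw [hB]; ring
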